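/- Validity of the path-elimination cuts (justification of Remarks 1–3): let the total cost of a routing plan f be obj f = ζev · N f + K f + Σ_{q ∈ Q} C q · f q, let q ≠ 0 and 0 ≤ λ ≤ f q, and let f'' be the plan obtained from f by rerouting λ vehicles from path q back to the min-operation path 0 (f'' 0 = f 0 + λ, f'' q = f q − λ, f'' p = f p for p ≠ 0, q). Then obj f'' − obj f ≤ ΔC, where ΔC = λ · (C 0 − C q) + κ · λ · Σ_{e ∈ Aq 0 \ Aq q} w e + (if t q < t 0 then ζev · λ else 0). In particular, if ΔC ≤ 0 then obj f'' ≤ obj f, so any plan using path q can be replaced by one avoiding it at no greater cost; hence paths with ΔC ≤ 0 can be eliminated without loss of optimality. -/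

import Mathlib

/-!
Rerouting `lam` vehicles from path `q` to path `0` changes the plan by
`Pi.single 0 lam - Pi.single q lam`, so every cost term that is linear in the plan changes by
`lam` times the difference of its path coefficients at `0` and `q`. For the operation cost
this is `lam * (C 0 - C q)`; for the charger cost the path coefficient of `p` is
`κ * Σ_{e ∈ Aq p} w e`, and the difference of two such sums is at most the sum over
`Aq 0 \ Aq q`. At each instant the busy-vehicle count changes by `lam` times the difference
of the indicators of `[a, a + t 0]` and `[a, a + t q]`; both intervals start at `a`, so this
is positive only if `t q < t 0`, and then at most `lam`. Taking maxima over `T`, the fleet size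
grows by at most that amount.
-/

open Finset

lemma sub_eq_single_sub_single {Q : Type*} [DecidableEq Q] {z q : Q} (hq : q ≠ z) {lam : ℝ}
    {g g' : Q → ℝ} (hz : g' z = g z + lam) (hq' : g' q = g q - lam)
    (hp : ∀ p, p ≠ z → p ≠ q → g' p = g p) :
    g' - g = Pi.single z lam - Pi.single q lam := by
  funext p
  by_cases hpz : p = z
  · subst hpz; simp [hz, hq]
  by_cases hpq : p = q
  · subst hpq; simp [hq', hpz]
  · simp [hp p hpz hpq, hpz, hpq]

lemma sum_mul_sub_sum_mul_of_reroute {Q : Type*} [Fintype Q] [DecidableEq Q] {z q : Q}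
    (hq : q ≠ z) {lam : ℝ} {g g' : Q → ℝ} (hz : g' z = g z + lam) (hq' : g' q = g q - lam)
    (hp : ∀ p, p ≠ z → p ≠ q → g' p = g p) (v : Q → ℝ) :
    ∑ p, g' p * v p - ∑ p, g p * v p = lam * (v z - v q) := by
  rw [← sum_sub_distrib]
  simp_rw [← sub_mul, ← Pi.sub_apply g' g, sub_eq_single_sub_single hq hz hq' hp, Pi.sub_apply,
    sub_mul, sum_sub_distrib, Pi.single_apply, ite_mul, zero_mul, sum_ite_eq', mem_univ,
    if_true, mul_sub]

lemma sum_mul_sum_ite_mem {Q A : Type*} [Fintype Q] [Fintype A] [DecidableEq A]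
    (w : A → ℝ) (Aq : Q → Finset A) (g : Q → ℝ) :
    ∑ e, w e * (∑ p, if e ∈ Aq p then g p else 0) = ∑ p, g p * ∑ e ∈ Aq p, w e := by
  simp_rw [mul_sum, mul_ite, mul_zero]
  rw [sum_comm]
  simp_rw [sum_ite_mem, univ_inter, mul_comm (w _)]

lemma Finset.sum_sub_sum_le_sum_sdiff {A : Type*} [DecidableEq A] {w : A → ℝ}
    (hw : ∀ e, 0 ≤ w e) (s t : Finset A) :
    ∑ e ∈ s, w e - ∑ e ∈ t, w e ≤ ∑ e ∈ s \ t, w e := by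
  rw [← sum_sdiff_sub_sum_sdiff]
  linarith [sum_nonneg fun e (_ : e ∈ t \ s) => hw e]

lemma ite_mem_Icc_sub_ite_mem_Icc_le (a s s' τ : ℝ) :
    ((if τ ∈ Set.Icc a (a + s) then 1 else 0) - if τ ∈ Set.Icc a (a + s') then 1 else 0)
      ≤ if s' < s then (1 : ℝ) else 0 := by
  by_cases hs : s' < s
  · rw [if_pos hs]; split_ifs <;> norm_num
  · have hsub : Set.Icc a (a + s) ⊆ Set.Icc a (a + s') := Set.Icc_subset_Icc_right (by linarith)
    rw [if_neg hs]
    split_ifs with h h' <;> first | exact absurd (hsub h) h' | norm_num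

lemma Finset.sup'_le_sup'_add {ι : Type*} {T : Finset ι} (hT : T.Nonempty) {F G : ι → ℝ}
    {c : ℝ} (h : ∀ τ ∈ T, F τ ≤ G τ + c) : T.sup' hT F ≤ T.sup' hT G + c :=
  sup'_le hT F fun τ hτ => (h τ hτ).trans (by gcongr; exact le_sup' G hτ)

theorem cuts_validity_general
    {Q : Type*} [Fintype Q] (zero : Q)
    (t C : Q → ℝ)
    (a : ℝ) (b : ℝ → ℝ) (T : Finset ℝ) (hT : T.Nonempty)
    (ζev : ℝ) (hζ : 0 ≤ ζev)
    (f : Q → ℝ)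
    (q : Q) (hq : q ≠ zero) (lam : ℝ) (hlam0 : 0 ≤ lam)
    (f'' : Q → ℝ) (hf''0 : f'' zero = f zero + lam) (hf''q : f'' q = f q - lam)
    (hf''p : ∀ p, p ≠ zero → p ≠ q → f'' p = f p)
    (drive : (Q → ℝ) → ℝ → ℝ)
    (hdrive : ∀ g τ, drive g τ =
      b τ + ∑ p, g p * (if τ ∈ Set.Icc a (a + t p) then (1 : ℝ) else 0))
    (N : (Q → ℝ) → ℝ) (hN : ∀ g, N g = T.sup' hT (fun τ => drive g τ))
    {A : Type*} [Fintype A] [DecidableEq A]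
    (w : A → ℝ) (hw : ∀ e, 0 ≤ w e) (Aq : Q → Finset A)
    (κ : ℝ) (hκ : 0 ≤ κ)
    (K : (Q → ℝ) → ℝ)
    (hK : ∀ g, K g = κ * ∑ e, w e * (∑ p, if e ∈ Aq p then g p else 0))
    (obj : (Q → ℝ) → ℝ) (hobj : ∀ g, obj g = ζev * N g + K g + ∑ p, C p * g p)
    (ΔC : ℝ)
    (hΔC : ΔC = lam * (C zero - C q) + κ * lam * (∑ e ∈ Aq zero \ Aq q, w e)
      + (if t q < t zero then ζev * lam else 0)) :
    obj f'' - obj f ≤ ΔC ∧ (ΔC ≤ 0 → obj f'' ≤ obj f) := by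
  classical
  have hlin := sum_mul_sub_sum_mul_of_reroute hq hf''0 hf''q hf''p
  have hoperation : ∑ p, C p * f'' p - ∑ p, C p * f p = lam * (C zero - C q) := by
    simp_rw [mul_comm (C _)]
    exact hlin C
  have hcharger : K f'' - K f ≤ κ * lam * ∑ e ∈ Aq zero \ Aq q, w e := by
    rw [hK, hK, sum_mul_sum_ite_mem, sum_mul_sum_ite_mem, ← mul_sub, hlin, ← mul_assoc]
    exact mul_le_mul_of_nonneg_left (sum_sub_sum_le_sum_sdiff hw _ _) (mul_nonneg hκ hlam0)
  have hfleet : N f'' ≤ N f + if t q < t zero then lam else 0 := by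
    rw [hN, hN]
    refine sup'_le_sup'_add hT fun τ _ => ?_
    have hdiff := hlin fun p => if τ ∈ Set.Icc a (a + t p) then (1 : ℝ) else 0
    have hind := mul_le_mul_of_nonneg_left (ite_mem_Icc_sub_ite_mem_Icc_le a (t zero) (t q) τ)
      hlam0
    rw [mul_ite, mul_one, mul_zero] at hind
    rw [hdrive, hdrive]
    linarith
  have hfleetCost : ζev * N f'' ≤ ζev * N f + if t q < t zero then ζev * lam else 0 := by
    simpa only [mul_add, mul_ite, mul_zero] using mul_le_mul_of_nonneg_left hfleet hζ
  have hmain : obj f'' - obj f ≤ ΔC := by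
    rw [hobj, hobj, hΔC]
    linarith
  exact ⟨hmain, fun h => by linarith⟩

/-- Validity of the path-elimination cuts (Remarks 1–3): rerouting `lam` vehicles from a
path `q` back to the min-operation path `zero` increases the total cost
`obj f = ζev * N f + K f + Σ C p * f p` by at most
`ΔC = lam*(C 0 - C q) + κ*lam*Σ_{e ∈ Aq 0 \ Aq q} w e + (if t q < t 0 then ζev*lam else 0)`;
in particular, if `ΔC ≤ 0` then `obj f'' ≤ obj f`, so paths with `ΔC ≤ 0` can be
eliminated without loss of optimality. -/
theorem cuts_validity
    {Q : Type*} [Fintype Q] [Nonempty Q] (zero : Q)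
    (t C : Q → ℝ) (ht : ∀ p, 0 ≤ t p) (hC : ∀ p, 0 ≤ C p) (hCmin : ∀ p, C zero ≤ C p)
    (a : ℝ) (b : ℝ → ℝ) (T : Finset ℝ) (hT : T.Nonempty)
    (ζev : ℝ) (hζ : 0 ≤ ζev)
    (f : Q → ℝ) (hf : ∀ p, 0 ≤ f p)
    (q : Q) (hq : q ≠ zero) (lam : ℝ) (hlam0 : 0 ≤ lam) (hlam : lam ≤ f q)
    (f'' : Q → ℝ) (hf''0 : f'' zero = f zero + lam) (hf''q : f'' q = f q - lam)
    (hf''p : ∀ p, p ≠ zero → p ≠ q → f'' p = f p)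
    (drive : (Q → ℝ) → ℝ → ℝ)
    (hdrive : ∀ g τ, drive g τ =
      b τ + ∑ p, g p * (if τ ∈ Set.Icc a (a + t p) then (1 : ℝ) else 0))
    (N : (Q → ℝ) → ℝ) (hN : ∀ g, N g = T.sup' hT (fun τ => drive g τ))
    {A : Type*} [Fintype A] [DecidableEq A]
    (w : A → ℝ) (hw : ∀ e, 0 ≤ w e) (Aq : Q → Finset A)
    (κ : ℝ) (hκ : 0 ≤ κ)
    (K : (Q → ℝ) → ℝ)
    (hK : ∀ g, K g = κ * ∑ e, w e * (∑ p, if e ∈ Aq p then g p else 0))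
    (obj : (Q → ℝ) → ℝ) (hobj : ∀ g, obj g = ζev * N g + K g + ∑ p, C p * g p)
    (ΔC : ℝ)
    (hΔC : ΔC = lam * (C zero - C q) + κ * lam * (∑ e ∈ Aq zero \ Aq q, w e)
      + (if t q < t zero then ζev * lam else 0)) :
    obj f'' - obj f ≤ ΔC ∧ (ΔC ≤ 0 → obj f'' ≤ obj f) :=
  cuts_validity_general zero t C a b T hT ζev hζ f q hq lam hlam0 f'' hf''0 hf''q hf''p drive hdrive
    N hN w hw Aq κ hκ K hK obj hobj ΔC hΔC
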